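/- arXiv:1707.07507 — 3 statements merged into one kernel-verified Lean document; each statement's English description precedes it below -/
import Mathlib

section
/- Let D be a semilocal Prüfer domain with quotient field K. Then the set F(D) of all D-submodules of K is the disjoint union, over A ∈ SkOver(D), of the sets Frac(A) of fractional ideals of A; that is, every D-submodule of K is a fractional ideal of exactly one element of the skeleton SkOver(D). -/
/- Common background: Prüfer domains, semistar and (fractional) star operations,
standard decomposition, skeleton, supports, `hiSpec`, the rings `Z(P)`,
and the invariants `ω` and `ε`, following Spirito,
"Semistar operations on semilocal Prüfer domains". -/

set_option linter.unusedSectionVars false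
set_option maxHeartbeats 1000000

open Pointwise

noncomputable section

namespace Paper

variable (D : Type*) [CommRing D] [IsDomain D]
variable (K : Type*) [Field K] [Algebra D K] [IsFractionRing D K]

/-- The localization of `D` at a prime ideal `P`, viewed as an overring of `D`
inside its quotient field `K`. -/
def locAt (P : Ideal D) (hP : P.IsPrime) : Subalgebra D K :=
  Localization.subalgebra K (@Ideal.primeCompl D _ P hP)
    (fun _ hx => mem_nonZeroDivisors_of_ne_zero fun h => hx (h ▸ P.zero_mem))

/-- A Prüfer domain: every localization at a prime ideal is a valuation domain
(any two elements are comparable w.r.t. divisibility). -/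
def IsPrufer : Prop :=
  ∀ (P : Ideal D) (hP : P.IsPrime), ∀ x y : locAt D K P hP, ∃ z, x * z = y ∨ y * z = x

/-- A semilocal ring: finitely many maximal ideals. -/
def IsSemilocal : Prop := {I : Ideal D | I.IsMaximal}.Finite

/-- Two ideals are dependent if some nonzero prime ideal is contained in both. -/
def Dependent (M N : Ideal D) : Prop :=
  ∃ P : Ideal D, P.IsPrime ∧ P ≠ ⊥ ∧ P ≤ M ∧ P ≤ N

/-- The member of the standard decomposition corresponding to the dependence class
of the maximal ideal `M`: the intersection of the localizations of `D` at the
maximal ideals dependent on `M`. -/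
def TOf (M : Ideal D) : Subalgebra D K :=
  sInf {A | ∃ (N : Ideal D) (hN : N.IsMaximal), Dependent D M N ∧ A = locAt D K N hN.isPrime}

/-- The standard decomposition of `D`. -/
def stdDecomp : Set (Subalgebra D K) :=
  {T | ∃ M : Ideal D, M.IsMaximal ∧ T = TOf D K M}

/-- The skeleton of `Over(D)`: all intersections of subsets of the standard
decomposition (including the empty intersection `K` and the total one `D`). -/
def SkOver : Set (Subalgebra D K) :=
  {A | ∃ S ⊆ stdDecomp D K, A = sInf S}

/-- `I` is a fractional ideal of the overring `A` of `D`: it is an `A`-submodule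
of `K` and `dI ⊆ A` for some nonzero `d ∈ K`. -/
def IsFracOf (A : Subalgebra D K) (I : Submodule D K) : Prop :=
  (∀ a ∈ A, ∀ x ∈ I, a * x ∈ I) ∧ ∃ d : K, d ≠ 0 ∧ ∀ x ∈ I, d * x ∈ A

end Paper

namespace Paper

/-- A semistar operation on a domain `R` with quotient field `K`: an extensive,
order-preserving, idempotent self-map of the set of `R`-submodules of `K` such
that `(xI)^⋆ = x·I^⋆` for every nonzero `x ∈ K`. -/
structure Semistar (R : Type*) [CommRing R] (K : Type*) [Field K] [Algebra R K] where
  toFun : Submodule R K → Submodule R K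
  le_star' : ∀ I, I ≤ toFun I
  mono' : ∀ ⦃I J⦄, I ≤ J → toFun I ≤ toFun J
  idem' : ∀ I, toFun (toFun I) = toFun I
  smul' : ∀ (x : K), x ≠ 0 → ∀ I,
    toFun (Submodule.span R {x} * I) = Submodule.span R {x} * toFun I

namespace Semistar

variable {R : Type*} [CommRing R] {K : Type*} [Field K] [Algebra R K]

theorem ext' {s t : Semistar R K} (h : s.toFun = t.toFun) : s = t := by
  cases s; cases t; cases h; rfl

instance : PartialOrder (Semistar R K) where
  le s t := ∀ I, s.toFun I ≤ t.toFun I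
  le_refl _ _ := le_rfl
  le_trans _ _ _ hab hbc I := (hab I).trans (hbc I)
  le_antisymm _ _ h h' := ext' (funext fun I => le_antisymm (h I) (h' I))

end Semistar

/-- The identity semistar operation `d`. -/
def dOp (R : Type*) [CommRing R] (K : Type*) [Field K] [Algebra R K] : Semistar R K where
  toFun I := I
  le_star' _ := le_rfl
  mono' _ _ h := h
  idem' _ := rfl
  smul' _ _ _ := rfl

end Paper

namespace Paper

variable (D : Type*) [CommRing D] [IsDomain D]
variable (K : Type*) [Field K] [Algebra D K] [IsFractionRing D K]

/-- A fractional star operation on an overring `A` of `D` (inside `K`): a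
semistar-like closure operation defined on the fractional ideals of `A`.
In particular `FracStar D K ⊥` is the set of fractional star operations on `D`. -/
structure FracStar (A : Subalgebra D K) where
  toFun : {I : Submodule D K // IsFracOf D K A I} → {I : Submodule D K // IsFracOf D K A I}
  le_star' : ∀ I, I.1 ≤ (toFun I).1
  mono' : ∀ I J, I.1 ≤ J.1 → (toFun I).1 ≤ (toFun J).1
  idem' : ∀ I, toFun (toFun I) = toFun I
  smul' : ∀ (x : K), x ≠ 0 → ∀ I J, J.1 = Submodule.span D {x} * I.1 →
    (toFun J).1 = Submodule.span D {x} * (toFun I).1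

namespace FracStar

variable {D K} {A : Subalgebra D K}

theorem ext' {s t : FracStar D K A} (h : s.toFun = t.toFun) : s = t := by
  cases s; cases t; cases h; rfl

instance : PartialOrder (FracStar D K A) where
  le s t := ∀ I, (s.toFun I).1 ≤ (t.toFun I).1
  le_refl _ _ := le_rfl
  le_trans _ _ _ hab hbc I := (hab I).trans (hbc I)
  le_antisymm _ _ h h' := ext' (funext fun I => Subtype.ext (le_antisymm (h I) (h' I)))

end FracStar

/-- A fractional star operation on the overring `A` is a *star operation* if it
closes `A` itself. -/
def FracStar.IsStarOp {A : Subalgebra D K} (f : FracStar D K A) : Prop :=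
  ∀ h : IsFracOf D K A (Subalgebra.toSubmodule A),
    (f.toFun ⟨Subalgebra.toSubmodule A, h⟩).1 = Subalgebra.toSubmodule A

/-- The support of a semistar operation on `D`: the elements `A` of the skeleton
such that `A^⋆` is a fractional ideal of `A`. -/
def supp (s : Semistar D K) : Set (Subalgebra D K) :=
  {A | A ∈ SkOver D K ∧ IsFracOf D K A (s.toFun (Subalgebra.toSubmodule A))}

/-- The image of an ideal of `D` inside `K`. -/
def idealToK (P : Ideal D) : Submodule D K := Submodule.map (Algebra.linearMap D K) P

end Paper

namespace Paper

/-- An abstract fractional star operation on a commutative ring `A`, acting on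
the fractional ideals of `A` inside its fraction ring. -/
structure AFracStar (A : Type*) [CommRing A] where
  toFun : FractionalIdeal (nonZeroDivisors A) (FractionRing A) →
    FractionalIdeal (nonZeroDivisors A) (FractionRing A)
  le_star' : ∀ I, I ≤ toFun I
  mono' : ∀ ⦃I J⦄, I ≤ J → toFun I ≤ toFun J
  idem' : ∀ I, toFun (toFun I) = toFun I
  smul' : ∀ (x : FractionRing A), x ≠ 0 → ∀ I,
    toFun (FractionalIdeal.spanSingleton (nonZeroDivisors A) x * I) =
      FractionalIdeal.spanSingleton (nonZeroDivisors A) x * toFun I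

namespace AFracStar

variable {A : Type*} [CommRing A]

theorem ext' {s t : AFracStar A} (h : s.toFun = t.toFun) : s = t := by
  cases s; cases t; cases h; rfl

instance : PartialOrder (AFracStar A) where
  le s t := ∀ I, s.toFun I ≤ t.toFun I
  le_refl _ _ := le_rfl
  le_trans _ _ _ hab hbc I := (hab I).trans (hbc I)
  le_antisymm _ _ h h' := ext' (funext fun I => le_antisymm (h I) (h' I))

end AFracStar

/-- Abstract star operations on `A`: fractional star operations closing `A`. -/
def AStar (A : Type*) [CommRing A] : Type _ := {s : AFracStar A // s.toFun 1 = 1}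

instance (A : Type*) [CommRing A] : PartialOrder (AStar A) :=
  inferInstanceAs (PartialOrder {s : AFracStar A // s.toFun 1 = 1})

end Paper

namespace Paper

variable (D : Type*) [CommRing D] [IsDomain D]

/-- `P` is a branching point of `Spec(D)`: the infimum (among the primes) of a
family of pairwise incomparable primes not containing `P`. -/
def IsBranchPoint (P : Ideal D) : Prop :=
  ∃ S : Set (Ideal D), (∀ Q ∈ S, Q.IsPrime) ∧
    (S.Pairwise fun Q₁ Q₂ => ¬Q₁ ≤ Q₂ ∧ ¬Q₂ ≤ Q₁) ∧ P ∉ S ∧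
    (∀ Q ∈ S, P ≤ Q) ∧ ∀ P' : Ideal D, P'.IsPrime → (∀ Q ∈ S, P' ≤ Q) → P' ≤ P

/-- The homeomorphically irreducible tree underlying `Spec(D)`: the zero ideal,
the maximal ideals and the branching points, ordered by inclusion. -/
def hiSpec : Set (Ideal D) :=
  {P | P.IsPrime ∧ (P = ⊥ ∨ P.IsMaximal ∨ IsBranchPoint D P)}

/-- `Q` is the element of `hiSpec D` directly below `P`. -/
def DirectlyBelow (Q P : Ideal D) : Prop :=
  Q ∈ hiSpec D ∧ P ∈ hiSpec D ∧ Q < P ∧ ∀ R ∈ hiSpec D, Q < R → ¬R < P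

/-- The localization of `D` at the prime ideal `P`, as an abstract ring. -/
abbrev locRing (P : Ideal D) (hP : P.IsPrime) : Type _ :=
  Localization (@Ideal.primeCompl D _ P hP)

/-- The valuation ring `Z(P) = D_P / Q·D_P`. -/
abbrev Zring (P Q : Ideal D) (hP : P.IsPrime) : Type _ :=
  locRing D P hP ⧸ Ideal.map (algebraMap D (locRing D P hP)) Q

/-- `ω(P) = |FStar(Z(P))|`, where `Q` is the element of `hiSpec D` directly
below `P`. -/
def omegaAt (P Q : Ideal D) (hP : P.IsPrime) : ℕ :=
  Nat.card (AFracStar (Zring D P Q hP))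

open Classical in
/-- `ε(P) = |Star(D_P)| ∈ {1,2}` for a (nonzero) prime `P`. -/
def epsilonOf (A : Ideal D) : ℕ :=
  if h : A.IsPrime then Nat.card (AStar (locRing D A h)) else 0

end Paper

namespace Paper

theorem mem_hiSpec_prime {D : Type*} [CommRing D] [IsDomain D] {P : Ideal D}
    (h : P ∈ hiSpec D) : P.IsPrime := h.1

theorem maximal_mem_hiSpec {D : Type*} [CommRing D] [IsDomain D] {M : Ideal D}
    (h : M.IsMaximal) : M ∈ hiSpec D := ⟨h.isPrime, Or.inr (Or.inl h)⟩

end Paper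


/-!
The fractional ideal in question is `A = ⋂ {T(M) : I D_M ≠ K}`. In a Prüfer domain the condition
`I D_M ≠ K` only depends on the dependence class of `M`, so one nonzero denominator for each of the
finitely many `M` with `I D_M ≠ K` makes `I` a fractional ideal of `A`, while `A I ⊆ I` is checked
locally at every maximal ideal. Conversely, let `I` be a fractional ideal of `⋂ S` with `S` a set
of members of the standard decomposition. If `T(M) ∉ S` then `⋂ S` contains the intersection of the
localizations at the maximal ideals independent of `M`, which generates `K` together with `D_M`;
hence `I D_M = K`. If `T(M) ∈ S` then `I` is bounded in `D_M`, so `I D_M ≠ K` unless `D_M = K`.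
Thus `⋂ S = A`.
-/

namespace Paper

variable {D : Type*} [CommRing D] [IsDomain D]
variable {K : Type*} [Field K] [Algebra D K]

section Stabilizer

/-- The ring of multipliers `(J : J)` of a `D`-submodule `J` of `K`. -/
def stabilizer (J : Submodule D K) : Subalgebra D K where
  carrier := {w | ∀ y ∈ J, w * y ∈ J}
  mul_mem' ha hb y hy := by rw [mul_assoc]; exact ha _ (hb y hy)
  add_mem' ha hb y hy := by rw [add_mul]; exact J.add_mem (ha y hy) (hb y hy)
  algebraMap_mem' r y hy := by rw [← Algebra.smul_def]; exact J.smul_mem r hy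

theorem mem_stabilizer {J : Submodule D K} {w : K} : w ∈ stabilizer J ↔ ∀ y ∈ J, w * y ∈ J :=
  Iff.rfl

variable (I : Submodule D K) (A : Subalgebra D K)

theorem le_mul_toSubmodule : I ≤ I * Subalgebra.toSubmodule A := fun x hx => by
  simpa using Submodule.mul_mem_mul hx (Subalgebra.mem_toSubmodule A |>.mpr A.one_mem)

theorem le_stabilizer_mul : A ≤ stabilizer (I * Subalgebra.toSubmodule A) := fun a ha x hx => by
  refine Submodule.mul_induction_on hx (fun m hm n hn => ?_) fun y z hy hz => ?_
  · rw [mul_left_comm]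
    exact Submodule.mul_mem_mul hm (A.mul_mem ha hn)
  · rw [mul_add]
    exact add_mem hy hz

theorem stabilizer_le_stabilizer_mul :
    stabilizer I ≤ stabilizer (I * Subalgebra.toSubmodule A) := fun w hw x hx => by
  refine Submodule.mul_induction_on hx (fun m hm n hn => ?_) fun y z hy hz => ?_
  · rw [← mul_assoc]
    exact Submodule.mul_mem_mul (hw m hm) hn
  · rw [mul_add]
    exact add_mem hy hz

theorem eq_top_of_stabilizer_eq_top {J : Submodule D K} (hJ : J ≠ ⊥) (h : stabilizer J = ⊤) :
    J = ⊤ := by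
  obtain ⟨y, hy, hy0⟩ := Submodule.exists_mem_ne_zero_of_ne_bot hJ
  refine eq_top_iff.mpr fun z _ => ?_
  have hz := mem_stabilizer.mp (h ▸ Algebra.mem_top : z * y⁻¹ ∈ stabilizer J) y hy
  rwa [inv_mul_cancel_right₀ hy0] at hz

theorem mul_mem_of_mem_mul {B : Subalgebra D K} {x z : K} (hI : ∀ y ∈ I, x * y ∈ B)
    (hA : A ≤ B) (hz : z ∈ I * Subalgebra.toSubmodule A) : x * z ∈ B := by
  refine Submodule.mul_induction_on hz (fun m hm n hn => ?_) fun y w hy hw => ?_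
  · rw [← mul_assoc]
    exact B.mul_mem (hI m hm) (hA hn)
  · rw [mul_add]
    exact B.add_mem hy hw

theorem mul_toSubmodule_ne_top {B : Subalgebra D K} {x : K} (hx0 : x ≠ 0)
    (hI : ∀ y ∈ I, x * y ∈ B) (hA : A ≤ B) (hB : B ≠ ⊤) : I * Subalgebra.toSubmodule A ≠ ⊤ :=
  fun htop => hB <| eq_top_iff.mpr fun z _ => by
    have := mul_mem_of_mem_mul I A hI hA (htop ▸ Submodule.mem_top : x⁻¹ * z ∈ _)
    rwa [mul_inv_cancel_left₀ hx0] at this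

end Stabilizer

variable [IsFractionRing D K]

theorem algebraMap_ne_zero {d : D} (hd : d ≠ 0) : algebraMap D K d ≠ 0 :=
  (map_ne_zero_iff _ (IsFractionRing.injective D K)).mpr hd

section Localization

variable {P : Ideal D} {hP : P.IsPrime}

theorem mem_locAt_iff {x : K} :
    x ∈ locAt D K P hP ↔ ∃ a s : D, s ∉ P ∧ algebraMap D K s * x = algebraMap D K a := by
  have hs0 : ∀ s : D, s ∉ P → algebraMap D K s ≠ 0 := fun s hs =>
    algebraMap_ne_zero (ne_of_mem_of_not_mem P.zero_mem hs).symm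
  constructor
  · rintro ⟨a, s, hs, rfl⟩
    exact ⟨a, s, hs, by rw [IsFractionRing.mk'_eq_div, mul_div_cancel₀ _ (hs0 s hs)]⟩
  · rintro ⟨a, s, hs, hx⟩
    exact ⟨a, s, hs, by rw [IsFractionRing.mk'_eq_div, eq_div_iff (hs0 s hs), mul_comm, hx]⟩

theorem inv_mem_locAt {s : D} (hs : s ∉ P) : (algebraMap D K s)⁻¹ ∈ locAt D K P hP :=
  mem_locAt_iff.mpr ⟨1, s, hs, by
    rw [map_one, mul_inv_cancel₀ (algebraMap_ne_zero (ne_of_mem_of_not_mem P.zero_mem hs).symm)]⟩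

theorem locAt_anti {Q : Ideal D} {hQ : Q.IsPrime} (h : Q ≤ P) :
    locAt D K P hP ≤ locAt D K Q hQ := fun _ hx =>
  let ⟨a, s, hs, hx⟩ := mem_locAt_iff.mp hx
  mem_locAt_iff.mpr ⟨a, s, fun h' => hs (h h'), hx⟩

theorem locAt_bot {hbot : (⊥ : Ideal D).IsPrime} : locAt D K ⊥ hbot = ⊤ := by
  refine eq_top_iff.mpr fun x _ => ?_
  obtain ⟨a, b, hb, rfl⟩ := IsFractionRing.div_surjective (A := D) x
  rw [div_eq_mul_inv]
  exact mul_mem (Subalgebra.algebraMap_mem _ a)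
    (inv_mem_locAt fun h => nonZeroDivisors.ne_zero hb ((Submodule.mem_bot D).mp h))

theorem locAt_ne_top (h0 : P ≠ ⊥) : locAt D K P hP ≠ ⊤ := by
  obtain ⟨m, hm, hm0⟩ := Submodule.exists_mem_ne_zero_of_ne_bot h0
  intro htop
  have hmem : (algebraMap D K m)⁻¹ ∈ locAt D K P hP := htop ▸ Algebra.mem_top
  obtain ⟨a, s, hs, hst⟩ := mem_locAt_iff.mp hmem
  have : algebraMap D K s = algebraMap D K (a * m) := by
    rw [map_mul, ← hst, inv_mul_cancel_right₀ (algebraMap_ne_zero hm0)]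
  exact hs (IsFractionRing.injective D K this ▸ P.mul_mem_left a hm)

theorem mem_of_algebraMap_eq_mul {Q : Ideal D} (hQ : Q.IsPrime) (hQP : Q ≤ P) {x y : D}
    (hy : y ∈ Q) {t : K} (ht : t ∈ locAt D K P hP)
    (h : algebraMap D K x = t * algebraMap D K y) : x ∈ Q := by
  obtain ⟨a, s, hs, hst⟩ := mem_locAt_iff.mp ht
  have : s * x = a * y := IsFractionRing.injective D K <| by
    rw [map_mul, map_mul, h, ← mul_assoc, hst]
  exact (hQ.mem_or_mem (this ▸ Q.mul_mem_left a hy)).resolve_left fun h' => hs (hQP h')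

end Localization

section Prufer

variable {P : Ideal D} {hP : P.IsPrime}

theorem IsPrufer.mem_or_inv_mem (hPruf : IsPrufer D K) (z : K) :
    z ∈ locAt D K P hP ∨ z⁻¹ ∈ locAt D K P hP := by
  obtain ⟨a, b, hb, rfl⟩ := IsFractionRing.div_surjective (A := D) z
  have hb0 : algebraMap D K b ≠ 0 := algebraMap_ne_zero (nonZeroDivisors.ne_zero hb)
  obtain ⟨t, ht | ht⟩ := hPruf P hP ⟨_, Subalgebra.algebraMap_mem _ a⟩
    ⟨_, Subalgebra.algebraMap_mem _ b⟩
  · have ht : algebraMap D K a * t = algebraMap D K b := congrArg Subtype.val ht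
    have ha0 : algebraMap D K a ≠ 0 := by rintro h; rw [h, zero_mul] at ht; exact hb0 ht.symm
    right
    rw [inv_div, ← ht, mul_div_cancel_left₀ _ ha0]
    exact t.2
  · have ht : algebraMap D K b * t = algebraMap D K a := congrArg Subtype.val ht
    left
    rw [← ht, mul_div_cancel_left₀ _ hb0]
    exact t.2

theorem IsPrufer.le_or_le (hPruf : IsPrufer D K) (hP : P.IsPrime) {Q₁ Q₂ : Ideal D}
    (hQ₁ : Q₁.IsPrime) (hQ₂ : Q₂.IsPrime) (h₁ : Q₁ ≤ P) (h₂ : Q₂ ≤ P) : Q₁ ≤ Q₂ ∨ Q₂ ≤ Q₁ := by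
  refine or_iff_not_imp_left.mpr fun h q hq => ?_
  obtain ⟨p, hp, hpQ₂⟩ := Set.not_subset.mp h
  have hp0 : algebraMap D K p ≠ 0 :=
    algebraMap_ne_zero (ne_of_mem_of_not_mem Q₂.zero_mem hpQ₂).symm
  by_cases hq0 : algebraMap D K q = 0
  · rw [(map_eq_zero_iff _ (IsFractionRing.injective D K)).mp hq0]
    exact Q₁.zero_mem
  rcases hPruf.mem_or_inv_mem (P := P) (hP := hP) (algebraMap D K p / algebraMap D K q)
    with ht | ht
  · exact absurd (mem_of_algebraMap_eq_mul hQ₂ h₂ hq ht (div_mul_cancel₀ _ hq0).symm) hpQ₂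
  · rw [inv_div] at ht
    exact mem_of_algebraMap_eq_mul hQ₁ h₁ hp ht (div_mul_cancel₀ _ hp0).symm

end Prufer

section Dependence

theorem Dependent.symm {M N : Ideal D} (h : Dependent D M N) : Dependent D N M :=
  let ⟨P, hP, hP0, hPM, hPN⟩ := h
  ⟨P, hP, hP0, hPN, hPM⟩

theorem IsPrufer.dependent_trans (hPruf : IsPrufer D K) {L M N : Ideal D} (hM : M.IsPrime)
    (hLM : Dependent D L M) (hMN : Dependent D M N) : Dependent D L N := by
  obtain ⟨P, hP, hP0, hPL, hPM⟩ := hLM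
  obtain ⟨Q, hQ, hQ0, hQM, hQN⟩ := hMN
  rcases hPruf.le_or_le hM hP hQ hPM hQM with h | h
  · exact ⟨P, hP, hP0, hPL, h.trans hQN⟩
  · exact ⟨Q, hQ, hQ0, h.trans hPL, hQN⟩

theorem mem_TOf {M : Ideal D} {x : K} :
    x ∈ TOf D K M ↔
      ∀ (N : Ideal D) (hN : N.IsMaximal), Dependent D M N → x ∈ locAt D K N hN.isPrime := by
  refine Algebra.mem_sInf.trans ⟨fun h N hN hMN => h _ ⟨N, hN, hMN, rfl⟩, ?_⟩
  rintro h _ ⟨N, hN, hMN, rfl⟩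
  exact h N hN hMN

theorem TOf_le_locAt {M : Ideal D} (hM : M.IsMaximal) (h0 : M ≠ ⊥) :
    TOf D K M ≤ locAt D K M hM.isPrime := fun _ hx =>
  mem_TOf.mp hx M hM ⟨M, hM.isPrime, h0, le_rfl, le_rfl⟩

theorem TOf_bot : TOf D K ⊥ = ⊤ :=
  eq_top_iff.mpr fun _ _ => mem_TOf.mpr fun _ _ h =>
    let ⟨_, _, hP0, hP, _⟩ := h
    absurd (le_bot_iff.mp hP) hP0

theorem IsPrufer.TOf_eq_of_dependent (hPruf : IsPrufer D K) {M N : Ideal D} (hM : M.IsPrime)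
    (hN : N.IsPrime) (h : Dependent D M N) : TOf D K M = TOf D K N :=
  SetLike.ext fun _ => by
    simp only [mem_TOf]
    exact ⟨fun hx L hL hNL => hx L hL (hPruf.dependent_trans hN h hNL),
      fun hx L hL hML => hx L hL (hPruf.dependent_trans hM h.symm hML)⟩

end Dependence

section LocalGlobal

variable {I : Submodule D K} {x : K}

theorem exists_smul_mem_of_mem_mul_locAt {N : Ideal D} {hN : N.IsPrime}
    (hx : x ∈ I * Subalgebra.toSubmodule (locAt D K N hN)) : ∃ s ∉ N, s • x ∈ I := by
  refine Submodule.mul_induction_on hx (fun m hm n hn => ?_) fun y z ⟨s, hs, hy⟩ ⟨t, ht, hz⟩ => ?_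
  · obtain ⟨a, s, hs, hsn⟩ := mem_locAt_iff.mp hn
    refine ⟨s, hs, ?_⟩
    rw [Algebra.smul_def, mul_left_comm, hsn, mul_comm, ← Algebra.smul_def]
    exact I.smul_mem a hm
  · refine ⟨t * s, fun h => (hN.mem_or_mem h).elim ht hs, ?_⟩
    rw [smul_add, mul_smul, mul_comm, mul_smul]
    exact I.add_mem (I.smul_mem t hy) (I.smul_mem s hz)

theorem mem_of_forall_mem_mul_locAt
    (h : ∀ (N : Ideal D) (hN : N.IsMaximal),
      x ∈ I * Subalgebra.toSubmodule (locAt D K N hN.isPrime)) : x ∈ I := by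
  have hcolon : I.comap (LinearMap.toSpanSingleton D K x) = ⊤ := by
    by_contra hne
    obtain ⟨N, hN, hle⟩ := Ideal.exists_le_maximal _ hne
    obtain ⟨s, hs, hsx⟩ := exists_smul_mem_of_mem_mul_locAt (h N hN)
    exact hs (hle hsx)
  simpa using (hcolon ▸ Submodule.mem_top : (1 : D) ∈ I.comap (LinearMap.toSpanSingleton D K x))

end LocalGlobal

section Bounds

variable {I : Submodule D K}

theorem IsPrufer.exists_mul_mem_locAt (hPruf : IsPrufer D K) {N : Ideal D} {hN : N.IsPrime}
    {J : Submodule D K} (hJ : locAt D K N hN ≤ stabilizer J) (hJtop : J ≠ ⊤) :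
    ∃ x : K, x ≠ 0 ∧ ∀ y ∈ J, x * y ∈ locAt D K N hN := by
  obtain ⟨z, hz⟩ : ∃ z, z ∉ J := by
    by_contra! h
    exact hJtop (eq_top_iff.mpr fun y _ => h y)
  have hz0 : z ≠ 0 := ne_of_mem_of_not_mem J.zero_mem hz |>.symm
  refine ⟨z⁻¹, inv_ne_zero hz0, fun y hy => ?_⟩
  rcases hPruf.mem_or_inv_mem (z⁻¹ * y) with h | h
  · exact h
  · by_cases hy0 : y = 0
    · rw [hy0, mul_zero]
      exact Subalgebra.zero_mem _
    · refine absurd ?_ hz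
      have := hJ h y hy
      rwa [mul_inv, inv_inv, mul_assoc, inv_mul_cancel₀ hy0, mul_one] at this

theorem exists_algebraMap_mul_mem {A : Subalgebra D K} {x : K} (hx0 : x ≠ 0)
    (hx : ∀ y ∈ I, x * y ∈ A) : ∃ d : D, d ≠ 0 ∧ ∀ y ∈ I, algebraMap D K d * y ∈ A := by
  obtain ⟨a, b, hb, rfl⟩ := IsFractionRing.div_surjective (A := D) x
  have hb0 : algebraMap D K b ≠ 0 := algebraMap_ne_zero (nonZeroDivisors.ne_zero hb)
  refine ⟨a, fun ha => hx0 (by rw [ha, map_zero, zero_div]), fun y hy => ?_⟩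
  have := A.mul_mem (A.algebraMap_mem b) (hx y hy)
  rwa [← mul_assoc, mul_div_cancel₀ _ hb0] at this

theorem exists_algebraMap_mul_mem_of_finite {s : Set (Subalgebra D K)} (hs : s.Finite)
    (h : ∀ A ∈ s, ∃ d : D, d ≠ 0 ∧ ∀ y ∈ I, algebraMap D K d * y ∈ A) :
    ∃ d : D, d ≠ 0 ∧ ∀ A ∈ s, ∀ y ∈ I, algebraMap D K d * y ∈ A := by
  induction s, hs using Set.Finite.induction_on with
  | empty => exact ⟨1, one_ne_zero, by simp⟩
  | @insert B s _ _ ih =>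
    obtain ⟨d, hd0, hd⟩ := ih fun A hA => h A (Set.mem_insert_of_mem B hA)
    obtain ⟨e, he0, he⟩ := h B (Set.mem_insert B s)
    refine ⟨e * d, mul_ne_zero he0 hd0, fun A hA y hy => ?_⟩
    rw [map_mul, mul_assoc]
    rcases hA with rfl | hA
    · rw [mul_left_comm]
      exact A.mul_mem (A.algebraMap_mem d) (he y hy)
    · exact A.mul_mem (A.algebraMap_mem e) (hd A hA y hy)

theorem IsPrufer.mul_locAt_ne_top_of_dependent (hPruf : IsPrufer D K) {N N' : Ideal D}
    {hN : N.IsPrime} {hN' : N'.IsPrime} (hdep : Dependent D N N')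
    (h : I * Subalgebra.toSubmodule (locAt D K N hN) ≠ ⊤) :
    I * Subalgebra.toSubmodule (locAt D K N' hN') ≠ ⊤ := by
  obtain ⟨Q, hQ, hQ0, hQN, hQN'⟩ := hdep
  obtain ⟨x, hx0, hx⟩ := hPruf.exists_mul_mem_locAt (le_stabilizer_mul I _) h
  exact mul_toSubmodule_ne_top I _ hx0
    (fun y hy => locAt_anti (hQ := hQ) hQN (hx y (le_mul_toSubmodule I _ hy)))
    (locAt_anti hQN') (locAt_ne_top hQ0)

end Bounds

section Jaffard

variable {N : Ideal D} {hN : N.IsPrime} {E : Subalgebra D K}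

/-- The center in `D` of a proper overring `E` of the valuation domain `D_N`: as `E` is itself a
valuation ring, the elements of `D` that are not units of `E` form a prime ideal. -/
theorem IsPrufer.exists_prime_of_locAt_le (hPruf : IsPrufer D K) (hNE : locAt D K N hN ≤ E)
    (hE : E ≠ ⊤) : ∃ P : Ideal D, P.IsPrime ∧ P ≠ ⊥ ∧ P ≤ N ∧
      ∀ c ∈ P, (algebraMap D K c)⁻¹ ∈ E → c = 0 := by
  let V := ValuationSubring.ofSubring E.toSubring fun z =>
    (hPruf.mem_or_inv_mem (hP := hN) z).imp (@hNE z) (@hNE _)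
  let φ : D →+* V := (algebraMap D K).codRestrict V fun d => E.algebraMap_mem d
  let P := (IsLocalRing.maximalIdeal V).comap φ
  have inv_mem : ∀ c ∉ P, (algebraMap D K c)⁻¹ ∈ E := fun c hc => by
    obtain ⟨u, hu⟩ := (not_not.mp hc : IsUnit (φ c)).exists_right_inv
    have hu : algebraMap D K c * u = 1 := congrArg Subtype.val hu
    rw [inv_eq_of_mul_eq_one_right hu]
    exact u.2
  have not_inv_mem : ∀ c ∈ P, (algebraMap D K c)⁻¹ ∈ E → c = 0 := fun c hc hinv => by
    by_contra hc0
    exact hc (IsUnit.of_mul_eq_one (a := φ c) ⟨_, hinv⟩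
      (Subtype.ext (mul_inv_cancel₀ (algebraMap_ne_zero hc0))))
  refine ⟨P, Ideal.comap_isPrime _ _, ?_, fun c hc => by_contra fun hcN => ?_, not_inv_mem⟩
  · obtain ⟨z, hz⟩ : ∃ z, z ∉ E := by
      by_contra! h
      exact hE (eq_top_iff.mpr fun y _ => h y)
    obtain ⟨a, b, hb, rfl⟩ := IsFractionRing.div_surjective (A := D) z
    have hbP : b ∈ P := by_contra fun hbP => hz <| by
      rw [div_eq_mul_inv]
      exact E.mul_mem (E.algebraMap_mem a) (inv_mem b hbP)
    exact fun hbot => nonZeroDivisors.ne_zero hb (by simpa [hbot] using hbP)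
  · exact ne_of_mem_of_not_mem N.zero_mem hcN
      (not_inv_mem c hc (hNE (inv_mem_locAt hcN))).symm

/-- Jaffard property of the standard decomposition: `D_N` and the intersection of the
localizations at the maximal ideals independent of `N` generate `K`. The center of an overring
`E ≠ K` of both would be a nonzero prime below `N`, hence contained in no independent maximal
ideal, and prime avoidance yields `u` in it with `u⁻¹` in every such localization. -/
theorem IsPrufer.eq_top_of_locAt_le (hPruf : IsPrufer D K) (hsl : IsSemilocal D)
    (hNE : locAt D K N hN ≤ E)
    (hE : ∀ w : K, (∀ (N' : Ideal D) (hN' : N'.IsMaximal), ¬Dependent D N N' →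
      w ∈ locAt D K N' hN'.isPrime) → w ∈ E) : E = ⊤ := by
  by_contra hEtop
  obtain ⟨P, hP, hP0, hPN, hPE⟩ := hPruf.exists_prime_of_locAt_le hNE hEtop
  let indep := {N' : Ideal D | N'.IsMaximal ∧ ¬Dependent D N N'}
  obtain ⟨u, huP, hu⟩ : ∃ u ∈ P, ∀ N' ∈ indep, u ∉ N' := by
    by_contra! h
    obtain ⟨N', hN', hPN'⟩ := (Ideal.subset_union_prime_finite (s := indep)
      (hsl.subset fun _ h => h.1) (f := id) ⊥ ⊥ fun N' hN' _ _ => hN'.1.isPrime).mp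
        fun u hu => let ⟨N', hN', huN'⟩ := h u hu; Set.mem_biUnion hN' huN'
    exact hN'.2 ⟨P, hP, hP0, hPN, hPN'⟩
  have hu0 := hPE u huP (hE _ fun N' hN' hind => inv_mem_locAt (hu N' ⟨hN', hind⟩))
  exact hEtop (eq_top_iff.mpr fun w _ =>
    hE w fun N' hN' hind => absurd N'.zero_mem (hu0 ▸ hu N' ⟨hN', hind⟩))

end Jaffard

section Support

def boundedComponents (I : Submodule D K) : Set (Subalgebra D K) :=
  {T | ∃ (M : Ideal D) (hM : M.IsMaximal),
    I * Subalgebra.toSubmodule (locAt D K M hM.isPrime) ≠ ⊤ ∧ T = TOf D K M}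

variable {I : Submodule D K}

theorem boundedComponents_subset_stdDecomp : boundedComponents I ⊆ stdDecomp D K := by
  rintro _ ⟨M, hM, -, rfl⟩
  exact ⟨M, hM, rfl⟩

theorem ne_bot_of_mul_locAt_ne_top (hI : I ≠ ⊥) {M : Ideal D} {hM : M.IsPrime}
    (h : I * Subalgebra.toSubmodule (locAt D K M hM) ≠ ⊤) : M ≠ ⊥ := by
  rintro rfl
  rw [locAt_bot] at h
  exact h (eq_top_of_stabilizer_eq_top (ne_bot_of_le_ne_bot hI (le_mul_toSubmodule I ⊤))
    (eq_top_iff.mpr (le_stabilizer_mul I ⊤)))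

theorem sInf_boundedComponents_le_stabilizer (hI : I ≠ ⊥) :
    sInf (boundedComponents I) ≤ stabilizer I := fun a ha x hx =>
  mem_of_forall_mem_mul_locAt fun N hN => by
    by_cases hNI : I * Subalgebra.toSubmodule (locAt D K N hN.isPrime) = ⊤
    · rw [hNI]
      exact Submodule.mem_top
    · have haN := TOf_le_locAt hN (ne_bot_of_mul_locAt_ne_top hI hNI)
        (Algebra.mem_sInf.mp ha _ ⟨N, hN, hNI, rfl⟩)
      exact le_stabilizer_mul I _ haN x (le_mul_toSubmodule I _ hx)

theorem IsPrufer.exists_mul_mem_sInf_boundedComponents (hPruf : IsPrufer D K)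
    (hsl : IsSemilocal D) : ∃ d : K, d ≠ 0 ∧ ∀ x ∈ I, d * x ∈ sInf (boundedComponents I) := by
  let L := {A : Subalgebra D K | ∃ (N : Ideal D) (hN : N.IsMaximal),
    I * Subalgebra.toSubmodule (locAt D K N hN.isPrime) ≠ ⊤ ∧ A = locAt D K N hN.isPrime}
  have hL : L.Finite := by
    classical
    refine ((hsl.image fun N => if h : N.IsMaximal then locAt D K N h.isPrime else ⊤).subset ?_)
    rintro _ ⟨N, hN, -, rfl⟩
    exact ⟨N, hN, dif_pos hN⟩
  obtain ⟨d, hd0, hd⟩ := exists_algebraMap_mul_mem_of_finite hL <| by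
    rintro _ ⟨N, hN, hNI, rfl⟩
    obtain ⟨x, hx0, hx⟩ := hPruf.exists_mul_mem_locAt (le_stabilizer_mul I _) hNI
    exact exists_algebraMap_mul_mem hx0 fun y hy => hx y (le_mul_toSubmodule I _ hy)
  refine ⟨_, algebraMap_ne_zero hd0, fun x hx => Algebra.mem_sInf.mpr ?_⟩
  rintro _ ⟨N, hN, hNI, rfl⟩
  exact mem_TOf.mpr fun N' hN' hNN' =>
    hd _ ⟨N', hN', hPruf.mul_locAt_ne_top_of_dependent hNN' hNI, rfl⟩ x hx

theorem IsPrufer.boundedComponents_subset (hPruf : IsPrufer D K) (hsl : IsSemilocal D)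
    (hI : I ≠ ⊥) {S : Set (Subalgebra D K)} (hS : S ⊆ stdDecomp D K)
    (hSI : sInf S ≤ stabilizer I) : boundedComponents I ⊆ S := by
  rintro _ ⟨M, hM, hMI, rfl⟩
  by_contra hMS
  refine hMI (eq_top_of_stabilizer_eq_top (ne_bot_of_le_ne_bot hI (le_mul_toSubmodule I _))
    (hPruf.eq_top_of_locAt_le hsl (le_stabilizer_mul I _) fun w hw =>
      stabilizer_le_stabilizer_mul I _ (hSI (Algebra.mem_sInf.mpr fun T hT => ?_))))
  obtain ⟨M', hM', rfl⟩ := hS hT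
  refine mem_TOf.mpr fun N hN hM'N => hw N hN fun hMN => hMS ?_
  rwa [hPruf.TOf_eq_of_dependent hM.isPrime hM'.isPrime
    (hPruf.dependent_trans hN.isPrime hMN hM'N.symm)]

theorem mem_boundedComponents_or_eq_top {S : Set (Subalgebra D K)} (hS : S ⊆ stdDecomp D K)
    {T : Subalgebra D K} (hT : T ∈ S) {d : K} (hd0 : d ≠ 0) (hd : ∀ x ∈ I, d * x ∈ sInf S) :
    T ∈ boundedComponents I ∨ T = ⊤ := by
  obtain ⟨M, hM, rfl⟩ := hS hT
  by_cases hM0 : M = ⊥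
  · rw [hM0, TOf_bot]
    exact Or.inr rfl
  · exact Or.inl ⟨M, hM, mul_toSubmodule_ne_top I _ hd0
      (fun x hx => TOf_le_locAt hM hM0 (sInf_le hT (hd x hx))) le_rfl (locAt_ne_top hM0), rfl⟩

theorem IsPrufer.sInf_eq_sInf_boundedComponents (hPruf : IsPrufer D K) (hsl : IsSemilocal D)
    (hI : I ≠ ⊥) {S : Set (Subalgebra D K)} (hS : S ⊆ stdDecomp D K)
    (hSI : IsFracOf D K (sInf S) I) : sInf S = sInf (boundedComponents I) := by
  obtain ⟨hstab, d, hd0, hd⟩ := hSI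
  refine le_antisymm (sInf_le_sInf (hPruf.boundedComponents_subset hsl hI hS hstab))
    (le_sInf fun T hT => ?_)
  rcases mem_boundedComponents_or_eq_top hS hT hd0 hd with hT' | rfl
  · exact sInf_le hT'
  · exact le_top

end Support

end Paper

namespace Paper

/-- Let `D` be a semilocal Prüfer domain with quotient field `K`.
Then every (nonzero) `D`-submodule of `K` is a fractional ideal of exactly one
element of the skeleton `SkOver(D)`. -/
theorem statement0
    (D : Type*) [CommRing D] [IsDomain D]
    (K : Type*) [Field K] [Algebra D K] [IsFractionRing D K]
    (hPruf : IsPrufer D K) (hsl : IsSemilocal D) :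
    ∀ I : Submodule D K, I ≠ ⊥ →
      ∃! A : Subalgebra D K, A ∈ SkOver D K ∧ IsFracOf D K A I := by
  intro I hI
  refine ⟨sInf (boundedComponents I), ⟨⟨_, boundedComponents_subset_stdDecomp, rfl⟩,
    sInf_boundedComponents_le_stabilizer hI, hPruf.exists_mul_mem_sInf_boundedComponents hsl⟩, ?_⟩
  rintro _ ⟨⟨S, hS, rfl⟩, hSI⟩
  exact hPruf.sInf_eq_sInf_boundedComponents hsl hI hS hSI

end Paper
end
end

section
/- Let D be a semilocal Prüfer domain with standard decomposition Θ, and let ⋆ be a semistar operation on D. Then D^⋆ = D if and only if D ∈ supp(⋆) and Γ_T(⋆)(D) is a star operation on T for every T ∈ Θ. -/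
/- Common background: Prüfer domains, semistar and (fractional) star operations,
standard decomposition, skeleton, supports, `hiSpec`, the rings `Z(P)`,
and the invariants `ω` and `ε`, following Spirito,
"Semistar operations on semilocal Prüfer domains". -/

set_option linter.unusedSectionVars false
set_option maxHeartbeats 1000000

open Pointwise

noncomputable section

/-! Since `D` is the intersection of its localizations at its maximal ideals and each such
localization contains the member of `Θ` attached to its dependence class, `D = ⋂ Θ`. Hence
`D^⋆ = D` forces `D^⋆T = T` for every `T ∈ Θ`; conversely `D^⋆T = T` gives `D^⋆ ⊆ T`, so
`D^⋆ ⊆ ⋂ Θ = D`. -/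

namespace Paper

section StandardDecomposition

variable {D : Type*} [CommRing D] [IsDomain D]
variable {K : Type*} [Field K] [Algebra D K] [IsFractionRing D K]

theorem locAt_eq_ofField (P : Ideal D) (hP : P.IsPrime) :
    locAt D K P hP = Localization.subalgebra.ofField K _ P.primeCompl_le_nonZeroDivisors :=
  (Localization.subalgebra.ofField_eq K _ _).symm

theorem locAt_bot_eq_top (h : (⊥ : Ideal D).IsPrime) : locAt D K ⊥ h = ⊤ := by
  refine eq_top_iff.mpr fun x _ => ?_
  obtain ⟨a, b, hb, rfl⟩ := IsFractionRing.div_surjective (A := D) x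
  rw [locAt_eq_ofField, ← SetLike.mem_coe, Localization.subalgebra.ofField, Subalgebra.coe_copy]
  exact ⟨a, b, nonZeroDivisors.ne_zero hb, div_eq_mul_inv _ _⟩

theorem TOf_le_locAt_s10 {N : Ideal D} (hN : N.IsMaximal) (hN0 : N ≠ ⊥) :
    TOf D K N ≤ locAt D K N hN.isPrime :=
  sInf_le ⟨N, hN, ⟨N, hN.isPrime, hN0, le_rfl, le_rfl⟩, rfl⟩

theorem sInf_stdDecomp_le_locAt {N : Ideal D} (hN : N.IsMaximal) :
    sInf (stdDecomp D K) ≤ locAt D K N hN.isPrime := by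
  -- If `D` is a field, `⊥` is dependent on no ideal, so `TOf D K ⊥ = ⊤`; but then `D_⊥ = K` too.
  by_cases hN0 : N = ⊥
  · subst hN0
    rw [locAt_bot_eq_top]
    exact le_top
  · have hT : TOf D K N ∈ stdDecomp D K := ⟨N, hN, rfl⟩
    exact (sInf_le hT).trans (TOf_le_locAt_s10 hN hN0)

theorem sInf_stdDecomp_eq_bot : sInf (stdDecomp D K) = ⊥ := by
  refine eq_bot_iff.mpr ?_
  rw [← MaximalSpectrum.iInf_localization_eq_bot D K]
  exact le_iInf fun M => (sInf_stdDecomp_le_locAt M.isMaximal).trans (locAt_eq_ofField _ _).le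

end StandardDecomposition

section FractionalIdeals

variable {D : Type*} [CommRing D] {K : Type*} [Field K] [Algebra D K]

theorem isFracOf_toSubmodule_self (A : Subalgebra D K) :
    IsFracOf D K A (Subalgebra.toSubmodule A) :=
  ⟨fun _ ha _ hx => A.mul_mem ha hx, 1, one_ne_zero, fun x hx => by rwa [one_mul]⟩

theorem le_toSubmodule_of_mul_toSubmodule_eq {I : Submodule D K} {T : Subalgebra D K}
    (h : I * Subalgebra.toSubmodule T = Subalgebra.toSubmodule T) :
    I ≤ Subalgebra.toSubmodule T :=
  calc I = I * 1 := (mul_one I).symm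
    _ ≤ I * Subalgebra.toSubmodule T := mul_le_mul_right (Submodule.one_le.mpr T.one_mem) I
    _ = Subalgebra.toSubmodule T := h

end FractionalIdeals

theorem statement10_general
    (D : Type*) [CommRing D] [IsDomain D]
    (K : Type*) [Field K] [Algebra D K] [IsFractionRing D K]
    (s : Semistar D K) :
    s.toFun 1 = 1 ↔
      ((⊥ : Subalgebra D K) ∈ supp D K s ∧
        ∀ T ∈ stdDecomp D K,
          s.toFun 1 * Subalgebra.toSubmodule T = Subalgebra.toSubmodule T) := by
  have hbot : Subalgebra.toSubmodule (⊥ : Subalgebra D K) = 1 := Algebra.toSubmodule_bot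
  constructor
  · intro h
    refine ⟨⟨⟨stdDecomp D K, subset_rfl, sInf_stdDecomp_eq_bot.symm⟩, ?_⟩, fun T _ => ?_⟩
    · rw [hbot, h, ← hbot]
      exact isFracOf_toSubmodule_self ⊥
    · rw [h, one_mul]
  · rintro ⟨-, hT⟩
    refine le_antisymm ?_ (s.le_star' 1)
    calc s.toFun 1 ≤ sInf (Subalgebra.toSubmodule '' stdDecomp D K) :=
          le_sInf <| Set.forall_mem_image.mpr fun T hT' =>
            le_toSubmodule_of_mul_toSubmodule_eq (hT T hT')
      _ = 1 := by rw [← Algebra.sInf_toSubmodule, sInf_stdDecomp_eq_bot, hbot]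

/-- For a semistar operation `⋆` on a semilocal Prüfer domain `D`
with standard decomposition `Θ`: `D^⋆ = D` if and only if `D ∈ supp(⋆)` and, for
every `T ∈ Θ`, `Γ_T(⋆)(D)` is a star operation on `T` (i.e. `D^⋆·T = T`). -/
theorem statement10
    (D : Type*) [CommRing D] [IsDomain D]
    (K : Type*) [Field K] [Algebra D K] [IsFractionRing D K]
    (hPruf : IsPrufer D K) (hsl : IsSemilocal D)
    (s : Semistar D K) :
    s.toFun 1 = 1 ↔
      ((⊥ : Subalgebra D K) ∈ supp D K s ∧
        ∀ T ∈ stdDecomp D K,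
          s.toFun 1 * Subalgebra.toSubmodule T = Subalgebra.toSubmodule T) :=
  statement10_general D K s

end Paper
end
end

section
/- Let 𝒫 and 𝒬 be finite partially ordered sets, and for each natural number n let n̲ denote the linearly ordered set {1, …, n}. Define H_{𝒫,𝒬}(n) := |hom(𝒫, 𝒬 ⊕ n̲)|. Then H_{𝒫,𝒬} is a polynomial function of n of degree |𝒫|. -/
/- Common background: Prüfer domains, semistar and (fractional) star operations,
standard decomposition, skeleton, supports, `hiSpec`, the rings `Z(P)`,
and the invariants `ω` and `ε`, following Spirito,
"Semistar operations on semilocal Prüfer domains". -/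

set_option linter.unusedSectionVars false
set_option maxHeartbeats 1000000

open Pointwise

noncomputable section

/-! Sort the maps `F : P → Q ⊕ n̲` by the set `S ⊆ n̲` of values they take in `n̲`. Composing with
the order embedding of `Fin |S|` onto `S` identifies the maps with a given `S` with the maps into
`Q ⊕ Fin |S|` hitting every element of `Fin |S|`; writing `c k` for the number of the latter,
`H(n) = ∑ₖ (n choose k) c k`. A map hitting all of `Fin k` needs `k ≤ |P|`, and a linear
extension of `P` gives one for `k = |P|`, so `c |P| ≠ 0`. Since `n choose k` is the polynomial
`n(n-1)⋯(n-k+1)/k!` of degree `k`, `H` is a polynomial of degree `|P|`. -/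

namespace Paper

open Polynomial Finset

section RightRange

variable {α β γ δ : Type*}

def rightRange (f : α → β ⊕ₗ γ) : Set γ := {c | toLex (Sum.inr c) ∈ Set.range f}

theorem card_le_of_rightRange_eq_univ [Finite α] {f : α → β ⊕ₗ γ}
    (hf : rightRange f = Set.univ) : Nat.card γ ≤ Nat.card α := by
  choose s hs using fun c => (hf ▸ Set.mem_univ c : c ∈ rightRange f)
  exact Nat.card_le_card_of_injective s fun c c' h =>
    Sum.inr_injective (toLex.injective ((hs c).symm.trans (h ▸ hs c')))

variable [Preorder β] [Preorder γ] [Preorder δ]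

def sumLexMapRight (g : γ ↪o δ) : β ⊕ₗ γ ↪o β ⊕ₗ δ :=
  RelEmbedding.sumLexMap (RelEmbedding.refl (· ≤ ·)) g

@[simp]
theorem sumLexMapRight_inl (g : γ ↪o δ) (b : β) :
    sumLexMapRight g (toLex (Sum.inl b)) = toLex (Sum.inl b) := rfl

@[simp]
theorem sumLexMapRight_inr (g : γ ↪o δ) (c : γ) :
    sumLexMapRight (β := β) g (toLex (Sum.inr c)) = toLex (Sum.inr (g c)) := rfl

theorem rightRange_sumLexMapRight_comp (g : γ ↪o δ) (f : α → β ⊕ₗ γ) :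
    rightRange (sumLexMapRight g ∘ f) = g '' rightRange f := by
  ext d
  constructor
  · rintro ⟨a, ha⟩
    obtain ⟨b | c, hfa⟩ := toLex.surjective (f a)
    · simp [← hfa] at ha
    · exact ⟨c, ⟨a, hfa.symm⟩, by simpa [← hfa] using ha⟩
  · rintro ⟨c, ⟨a, ha⟩, rfl⟩
    exact ⟨a, by simp [ha]⟩

theorem range_subset_range_sumLexMapRight {g : γ ↪o δ} {F : α → β ⊕ₗ δ}
    (hF : rightRange F ⊆ Set.range g) : Set.range F ⊆ Set.range (sumLexMapRight (β := β) g) := by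
  rintro _ ⟨a, rfl⟩
  obtain ⟨b | d, hFa⟩ := toLex.surjective (F a)
  · exact ⟨toLex (Sum.inl b), by simp [hFa]⟩
  · obtain ⟨c, rfl⟩ := hF ⟨a, hFa.symm⟩
    exact ⟨toLex (Sum.inr c), by simp [hFa]⟩

variable [Preorder α]

theorem OrderEmbedding.exists_comp_eq_of_range_subset (E : γ ↪o δ) (F : α →o δ)
    (h : Set.range F ⊆ Set.range E) : ∃ f : α →o γ, E.toOrderHom.comp f = F := by
  choose f hf using fun a => h ⟨a, rfl⟩
  exact ⟨⟨f, fun a b hab => E.le_iff_le.1 (by simpa only [hf] using F.mono hab)⟩,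
    OrderHom.ext _ _ (funext hf)⟩

theorem card_rightRange_eq_range (g : γ ↪o δ) :
    Nat.card {F : α →o β ⊕ₗ δ // rightRange F = Set.range g} =
      Nat.card {f : α →o β ⊕ₗ γ // rightRange f = Set.univ} := by
  let E := sumLexMapRight (β := β) g
  have hrange (f : α →o β ⊕ₗ γ) : rightRange (E.toOrderHom.comp f) = g '' rightRange f :=
    rightRange_sumLexMapRight_comp g f
  refine (Nat.card_eq_of_bijective
    (fun f => ⟨E.toOrderHom.comp f.1, by rw [hrange, f.2, Set.image_univ]⟩)
    ⟨fun f f' h => ?_, fun F => ?_⟩).symm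
  · ext1; ext1; funext a
    exact E.injective (congrArg (fun F : {F : α →o β ⊕ₗ δ // _} => F.1 a) h)
  · obtain ⟨F, hF⟩ := F
    obtain ⟨f, rfl⟩ := OrderEmbedding.exists_comp_eq_of_range_subset E F
      (range_subset_range_sumLexMapRight hF.le)
    refine ⟨⟨f, Set.image_injective.2 g.injective ?_⟩, rfl⟩
    rw [← hrange, hF, Set.image_univ]

end RightRange

instance {α β : Type*} [Finite α] [Finite β] : Finite (α ⊕ₗ β) :=
  inferInstanceAs (Finite (α ⊕ β))

instance {α β : Type*} [Preorder α] [Preorder β] [Finite α] [Finite β] : Finite (α →o β) :=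
  DFunLike.finite _

theorem exists_monotone_equiv_fin (α : Type*) [PartialOrder α] [Fintype α] :
    ∃ e : α ≃ Fin (Fintype.card α), Monotone e := by
  let _ : Fintype (LinearExtension α) := ‹Fintype α›
  let e := (monoEquivOfFin (LinearExtension α) rfl).symm
  exact ⟨(Equiv.refl α).trans e.toEquiv, e.monotone.comp toLinearExtension.monotone⟩

section Count

variable (α β : Type*) [Preorder α] [Preorder β]

def rightSurjHomCount (k : ℕ) : ℕ := Nat.card {f : α →o β ⊕ₗ Fin k // rightRange f = Set.univ}

theorem rightSurjHomCount_eq_zero [Finite α] {k : ℕ} (hk : Nat.card α < k) :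
    rightSurjHomCount α β k = 0 := by
  have : IsEmpty {f : α →o β ⊕ₗ Fin k // rightRange f = Set.univ} :=
    ⟨fun f => hk.not_ge (by simpa using card_le_of_rightRange_eq_univ f.2)⟩
  exact Nat.card_of_isEmpty

theorem card_rightRange_eq_finset {n : ℕ} (S : Finset (Fin n)) :
    Nat.card {F : α →o β ⊕ₗ Fin n // rightRange F = S} = rightSurjHomCount α β S.card := by
  rw [← S.range_orderEmbOfFin rfl]
  exact card_rightRange_eq_range _

theorem card_hom_sumLex_fin [Finite α] [Finite β] (n : ℕ) :
    Nat.card (α →o β ⊕ₗ Fin n) = ∑ k ∈ range (n + 1), n.choose k * rightSurjHomCount α β k := by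
  classical
  calc Nat.card (α →o β ⊕ₗ Fin n)
      = ∑ S : Finset (Fin n),
          Nat.card {F : α →o β ⊕ₗ Fin n // (rightRange F).toFinset = S} := by
        rw [← Nat.card_congr (Equiv.sigmaFiberEquiv
          fun F : α →o β ⊕ₗ Fin n => (rightRange F).toFinset), Nat.card_sigma]
    _ = ∑ S : Finset (Fin n), rightSurjHomCount α β S.card := by
        refine sum_congr rfl fun S _ => ?_
        rw [← card_rightRange_eq_finset]
        exact Nat.card_congr (Equiv.subtypeEquivRight fun F => by
          rw [← Finset.coe_inj, Set.coe_toFinset])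
    _ = _ := by
        rw [← powerset_univ, sum_powerset_apply_card]
        simp

end Count

theorem rightSurjHomCount_card_pos (α β : Type*) [PartialOrder α] [Fintype α] [Preorder β]
    [Finite β] : 0 < rightSurjHomCount α β (Fintype.card α) := by
  obtain ⟨e, he⟩ := exists_monotone_equiv_fin α
  let f : α →o β ⊕ₗ Fin (Fintype.card α) :=
    ⟨fun a => toLex (Sum.inr (e a)), fun _ _ hab => Sum.Lex.inr_le_inr_iff.2 (he hab)⟩
  have hf : rightRange f = Set.univ := Set.eq_univ_of_forall fun i =>
    ⟨e.symm i, congrArg (toLex ∘ Sum.inr) (e.apply_symm_apply i)⟩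
  have : Nonempty {f : α →o β ⊕ₗ Fin (Fintype.card α) // rightRange f = Set.univ} := ⟨⟨f, hf⟩⟩
  exact Nat.card_pos

theorem sum_range_choose_mul_eq_of_eq_zero {f : ℕ → ℕ} {d : ℕ} (hf : ∀ k, d < k → f k = 0)
    (n : ℕ) : ∑ k ∈ range (n + 1), n.choose k * f k = ∑ k ∈ range (d + 1), n.choose k * f k := by
  have h (m : ℕ) (hm : m ≤ n + d) (hz : ∀ k, m < k → n.choose k * f k = 0) :
      ∑ k ∈ range (m + 1), n.choose k * f k = ∑ k ∈ range (n + d + 1), n.choose k * f k :=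
    sum_subset (range_subset_range.2 (by omega)) fun k _ hk => hz k (by simpa using hk)
  rw [h n (by omega) fun k hk => by rw [Nat.choose_eq_zero_of_lt hk, zero_mul],
    h d (by omega) fun k hk => by rw [hf k hk, mul_zero]]

theorem degree_sum_C_mul_descPochhammer {R : Type*} [Ring R] [IsDomain R] (a : ℕ → R) {d : ℕ}
    (ha : a d ≠ 0) : (∑ k ∈ range (d + 1), C (a k) * descPochhammer R k).degree = d := by
  have hlast : (C (a d) * descPochhammer R d).degree = d := by
    rw [degree_C_mul ha, degree_eq_natDegree (monic_descPochhammer R d).ne_zero,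
      descPochhammer_natDegree]
  have hlower : (∑ k ∈ range d, C (a k) * descPochhammer R k).degree < d := by
    refine (degree_sum_le _ _).trans_lt <| (Finset.sup_lt_iff (WithBot.bot_lt_coe d)).2 ?_
    intro k hk
    calc (C (a k) * descPochhammer R k).degree ≤ k := degree_le_of_natDegree_le <|
          (natDegree_C_mul_le _ _).trans (descPochhammer_natDegree R k).le
      _ < d := WithBot.coe_lt_coe.2 (mem_range.1 hk)
  rw [sum_range_succ, degree_add_eq_right_of_degree_lt (hlast ▸ hlower), hlast]

/-- For finite posets `𝒫, 𝒬`, the function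
`n ↦ |hom(𝒫, 𝒬 ⊕ n̲)|` is a polynomial function of degree `|𝒫|`. -/
theorem statement16
    (P : Type*) [PartialOrder P] [Fintype P]
    (Q : Type*) [PartialOrder Q] [Fintype Q] :
    ∃ p : Polynomial ℚ, p.degree = (Fintype.card P : WithBot ℕ) ∧
      ∀ n : ℕ, (Nat.card (P →o (Q ⊕ₗ Fin n)) : ℚ) = p.eval (n : ℚ) := by
  set d := Fintype.card P
  set c := rightSurjHomCount P Q
  have hc : c d ≠ 0 := (rightSurjHomCount_card_pos P Q).ne'
  refine ⟨∑ k ∈ range (d + 1), C ((c k : ℚ) / k.factorial) * descPochhammer ℚ k,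
    degree_sum_C_mul_descPochhammer _ (by positivity), fun n => ?_⟩
  have hvanish (k : ℕ) (hk : d < k) : c k = 0 :=
    rightSurjHomCount_eq_zero P Q (by rwa [Nat.card_eq_fintype_card])
  rw [card_hom_sumLex_fin, sum_range_choose_mul_eq_of_eq_zero hvanish, eval_finsetSum]
  push_cast
  refine sum_congr rfl fun k _ => ?_
  rw [eval_mul, eval_C, Nat.cast_choose_eq_descPochhammer_div]
  ring

end Paper
end
end
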